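/- Let 𝔤 = su(2,1), 𝔟 ⊆ 𝔤 its subalgebra of upper-triangular elements, and W ⊆ 𝔤 the unique real subspace with 𝔟 ⊆ W, dim_ℝ W = 7 and [𝔟, W] ⊆ W. Consider the 2-dimensional real quotient module W/𝔟, on which 𝔟 acts by b·(w mod 𝔟) = [b,w] mod 𝔟. Then there exist exactly two ℝ-linear endomorphisms 𝒥 of W/𝔟 satisfying 𝒥∘𝒥 = −id and commuting with the action of every element of 𝔟, and these two endomorphisms are negatives of each other. (Geometrically: the invariant rank-2 distribution on the CR sphere SU(2,1)/B carries exactly two invariant almost complex structures, ±𝒥.) -/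

import Mathlib

open Matrix

/-- The 3×3 antidiagonal matrix with ones on the antidiagonal. -/
def J3 : Matrix (Fin 3) (Fin 3) ℂ := !![0, 0, 1; 0, 1, 0; 1, 0, 0]

/-- The Borel subalgebra `𝔟 ⊆ su(2,1)` of upper-triangular elements, as a real
subspace of the 3×3 complex matrices. -/
noncomputable def borelSub : Submodule ℝ (Matrix (Fin 3) (Fin 3) ℂ) where
  carrier := {Xm | (Xmᴴ * J3 + J3 * Xm = 0 ∧ Xm.trace = 0) ∧
    ∀ i j : Fin 3, j < i → Xm i j = 0}
  zero_mem' := by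
    refine ⟨⟨?_, ?_⟩, ?_⟩ <;> simp
  add_mem' := by
    rintro Xm Ym ⟨⟨hX1, hX2⟩, hX3⟩ ⟨⟨hY1, hY2⟩, hY3⟩
    refine ⟨⟨?_, ?_⟩, ?_⟩
    · have h : (Xm + Ym)ᴴ * J3 + J3 * (Xm + Ym)
        = (Xmᴴ * J3 + J3 * Xm) + (Ymᴴ * J3 + J3 * Ym) := by
        rw [Matrix.conjTranspose_add, Matrix.add_mul, Matrix.mul_add]; abel
      rw [h, hX1, hY1, add_zero]
    · rw [Matrix.trace_add, hX2, hY2, add_zero]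
    · intro i j hij
      simp [Matrix.add_apply, hX3 i j hij, hY3 i j hij]
  smul_mem' := by
    rintro r Xm ⟨⟨hX1, hX2⟩, hX3⟩
    refine ⟨⟨?_, ?_⟩, ?_⟩
    · have h : (r • Xm)ᴴ * J3 + J3 * (r • Xm) = r • (Xmᴴ * J3 + J3 * Xm) := by
        rw [Matrix.conjTranspose_smul, star_trivial, Matrix.smul_mul, Matrix.mul_smul,
          smul_add]
      rw [h, hX1, smul_zero]
    · rw [Matrix.trace_smul, hX2, smul_zero]
    · intro i j hij
      simp [Matrix.smul_apply, hX3 i j hij]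

/-!
Every `w ∈ W` has `w₂₀ = 0`: the kernel of `w ↦ (w₁₀, w₂₀)` on `W` is `𝔟` (as `w₂₁ = -conj w₁₀`),
so its image is 2-dimensional, while if `w₂₀ ≠ 0` then `w` and its brackets with the two root
vectors of `𝔟` in position `(0,1)` have three independent images. Hence `w ↦ w₁₀` identifies
`W/𝔟` with `ℂ`, and as `[X, w]₁₀ = (X₁₁ - X₀₀) w₁₀`, each `X ∈ 𝔟` acts by multiplication by
`X₁₁ - X₀₀`, which takes the non-real value `-3i`. An ℝ-linear map of `ℂ` commuting with
multiplication by a non-real number is multiplication by some `c`, and `c² = -1` forces `c = ±i`.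
-/

open Complex ComplexConjugate

lemma Complex.eq_mulLeft_of_commute_mulLeft {k : Module.End ℝ ℂ} {c : ℂ} (hc : c.im ≠ 0)
    (hk : Commute k (LinearMap.mulLeft ℝ c)) : k = LinearMap.mulLeft ℝ (k 1) := by
  have hI_eq : ∀ z : ℂ, I * z = c.im⁻¹ • (c * z - c.re • z) := by
    intro z
    apply Complex.ext <;> simp <;> field_simp
  have hkc : ∀ z, k (c * z) = c * k z := fun z => LinearMap.congr_fun hk z
  have hkI : k (I * 1) = I * k 1 := by
    rw [hI_eq, map_smul, map_sub, map_smul, hkc, ← hI_eq]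
  refine Complex.basisOneI.ext fun i => ?_
  fin_cases i
  · simp
  · simpa [mul_comm] using hkI

lemma Complex.mulLeft_mul_self_eq_neg_one_iff {c : ℂ} :
    LinearMap.mulLeft ℝ c * LinearMap.mulLeft ℝ c = -1 ↔ c = I ∨ c = -I := by
  rw [← mul_self_eq_mul_self_iff, I_mul_I]
  constructor
  · intro h
    simpa using LinearMap.congr_fun h 1
  · intro h
    ext z
    simp [← mul_assoc, h]

lemma Complex.mul_self_eq_neg_one_and_commute_iff {S : Set ℂ} (hS : ∃ c ∈ S, c.im ≠ 0)
    (k : Module.End ℝ ℂ) :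
    (k * k = -1 ∧ ∀ c ∈ S, Commute k (LinearMap.mulLeft ℝ c)) ↔
      k = LinearMap.mulLeft ℝ I ∨ k = -LinearMap.mulLeft ℝ I := by
  constructor
  · rintro ⟨hsq, hcomm⟩
    obtain ⟨c, hcS, hc⟩ := hS
    rw [eq_mulLeft_of_commute_mulLeft hc (hcomm c hcS), mulLeft_mul_self_eq_neg_one_iff] at hsq
    rw [eq_mulLeft_of_commute_mulLeft hc (hcomm c hcS)]
    rcases hsq with h | h
    · simp [h]
    · right; ext z; simp [h]
  · have hcomm : ∀ a b : ℂ, Commute (LinearMap.mulLeft ℝ a) (LinearMap.mulLeft ℝ b) :=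
      fun a b => by ext z; simp [mul_left_comm]
    rintro (rfl | rfl)
    · exact ⟨mulLeft_mul_self_eq_neg_one_iff.mpr (Or.inl rfl), fun c _ => hcomm I c⟩
    · exact ⟨by rw [neg_mul_neg]; exact mulLeft_mul_self_eq_neg_one_iff.mpr (Or.inl rfl),
        fun c _ => (hcomm I c).neg_left⟩

lemma LinearEquiv.conj_mul_self_eq_neg_one_iff {R M N : Type*} [CommRing R] [AddCommGroup M]
    [Module R M] [AddCommGroup N] [Module R N] (e : M ≃ₗ[R] N) (K : Module.End R M) :
    e.conj K * e.conj K = -1 ↔ ∀ x, K (K x) = -x := by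
  constructor
  · intro h x
    simpa using congrArg e.symm (LinearMap.congr_fun h (e x))
  · intro h
    ext y
    simp [h]

lemma LinearEquiv.eq_symm_conj_iff {R M N : Type*} [CommRing R] [AddCommGroup M]
    [Module R M] [AddCommGroup N] [Module R N] (e : M ≃ₗ[R] N) (K : Module.End R M)
    (k : Module.End R N) : K = e.symm.conj k ↔ e.conj K = k := by
  constructor
  · rintro rfl
    simp
  · rintro rfl
    simp

lemma Matrix.commutator_apply_one_zero {R : Type*} [CommRing R] {X : Matrix (Fin 3) (Fin 3) R}
    (hX : X.BlockTriangular id) (Y : Matrix (Fin 3) (Fin 3) R) :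
    (X * Y - Y * X) 1 0 = (X 1 1 - X 0 0) * Y 1 0 + X 1 2 * Y 2 0 := by
  simp [Matrix.mul_apply, Fin.sum_univ_three, hX (show (0 : Fin 3) < 1 by decide),
    hX (show (0 : Fin 3) < 2 by decide)]
  ring

lemma Matrix.commutator_apply_two_zero {R : Type*} [CommRing R] {X : Matrix (Fin 3) (Fin 3) R}
    (hX : X.BlockTriangular id) (Y : Matrix (Fin 3) (Fin 3) R) :
    (X * Y - Y * X) 2 0 = (X 2 2 - X 0 0) * Y 2 0 := by
  simp [Matrix.mul_apply, Fin.sum_univ_three, hX (show (0 : Fin 3) < 1 by decide),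
    hX (show (0 : Fin 3) < 2 by decide), hX (show (1 : Fin 3) < 2 by decide)]
  ring

lemma apply_rev_eq_neg_conj_apply_rev {X : Matrix (Fin 3) (Fin 3) ℂ}
    (hX : Xᴴ * J3 + J3 * X = 0) (i j : Fin 3) : X i.rev j = -conj (X j.rev i) := by
  have h := congrFun (congrFun hX i) j
  fin_cases i <;> fin_cases j <;>
    simp [J3, Matrix.mul_apply, Matrix.vecMul, dotProduct, Fin.sum_univ_three] at h ⊢ <;>
    linear_combination h

def borelMatrix (x y u v t : ℝ) : Matrix (Fin 3) (Fin 3) ℂ :=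
  !![x + y * I, u + v * I, t * I;
     0, -2 * y * I, -u + v * I;
     0, 0, -x + y * I]

lemma borelMatrix_mem (x y u v t : ℝ) : borelMatrix x y u v t ∈ borelSub := by
  refine ⟨⟨?_, ?_⟩, ?_⟩
  · ext i j
    fin_cases i <;> fin_cases j <;>
      simp [borelMatrix, J3, Matrix.mul_apply, Fin.sum_univ_three, Complex.ext_iff]
  · simp [borelMatrix, Matrix.trace_fin_three, Complex.ext_iff, two_mul]
  · intro i j h
    fin_cases i <;> fin_cases j <;> first
      | exact absurd h (by decide)
      | simp [borelMatrix]

lemma eq_borelMatrix_of_mem {X : Matrix (Fin 3) (Fin 3) ℂ} (hX : X ∈ borelSub) :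
    X = borelMatrix (X 0 0).re (X 0 0).im (X 0 1).re (X 0 1).im (X 0 2).im := by
  obtain ⟨⟨hJ, htr⟩, hlow⟩ := hX
  have h02 := apply_rev_eq_neg_conj_apply_rev hJ 2 2
  have h12 := apply_rev_eq_neg_conj_apply_rev hJ 1 2
  have h22 := apply_rev_eq_neg_conj_apply_rev hJ 0 2
  simp only [Fin.rev] at h02 h12 h22
  rw [Matrix.trace_fin_three] at htr
  ext i j
  fin_cases i <;> fin_cases j <;> simp [borelMatrix, hlow, Complex.ext_iff] at h02 h12 h22 htr ⊢ <;>
    first | linarith | constructor <;> linarith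

noncomputable def borelEquiv : borelSub ≃ₗ[ℝ] (Fin 5 → ℝ) where
  toFun X := ![(X.1 0 0).re, (X.1 0 0).im, (X.1 0 1).re, (X.1 0 1).im, (X.1 0 2).im]
  map_add' X Y := by ext i; fin_cases i <;> simp
  map_smul' r X := by ext i; fin_cases i <;> simp
  invFun c := ⟨borelMatrix (c 0) (c 1) (c 2) (c 3) (c 4), borelMatrix_mem _ _ _ _ _⟩
  left_inv X := Subtype.ext (eq_borelMatrix_of_mem X.2).symm
  right_inv c := by ext i; fin_cases i <;> simp [borelMatrix]

lemma finrank_borelSub : Module.finrank ℝ borelSub = 5 := by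
  simp [borelEquiv.finrank_eq]

lemma blockTriangular_of_mem_borelSub {X : Matrix (Fin 3) (Fin 3) ℂ} (hX : X ∈ borelSub) :
    X.BlockTriangular id :=
  fun i j h => hX.2 i j h

noncomputable def lowerFirstColumn : Matrix (Fin 3) (Fin 3) ℂ →ₗ[ℝ] ℂ × ℂ :=
  (Matrix.entryLinearMap ℝ ℂ 1 0).prod (Matrix.entryLinearMap ℝ ℂ 2 0)

@[simp]
lemma lowerFirstColumn_apply (X : Matrix (Fin 3) (Fin 3) ℂ) :
    lowerFirstColumn X = (X 1 0, X 2 0) :=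
  rfl

lemma lowerFirstColumn_commutator {X : Matrix (Fin 3) (Fin 3) ℂ} (hX : X.BlockTriangular id)
    (Y : Matrix (Fin 3) (Fin 3) ℂ) :
    lowerFirstColumn (X * Y - Y * X) =
      ((X 1 1 - X 0 0) * Y 1 0 + X 1 2 * Y 2 0, (X 2 2 - X 0 0) * Y 2 0) := by
  rw [lowerFirstColumn_apply, Matrix.commutator_apply_one_zero hX,
    Matrix.commutator_apply_two_zero hX]

lemma linearIndependent_complex_prod_triple (a : ℂ) {f : ℂ} (hf : f ≠ 0) :
    LinearIndependent ℝ ![((a, f) : ℂ × ℂ), (-f, 0), (I * f, 0)] := by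
  rw [Fintype.linearIndependent_iff]
  intro c hc
  simp only [Fin.sum_univ_three, Matrix.cons_val, Prod.smul_mk, Prod.mk_add_mk,
    Prod.mk_eq_zero, smul_zero, add_zero] at hc
  obtain ⟨hfirst, hsecond⟩ := hc
  have hc0 : c 0 = 0 := by simpa [hf] using hsecond
  have hc12 : (-(c 1 : ℂ) + c 2 * I) * f = 0 := by
    rw [hc0, zero_smul, zero_add, Complex.real_smul, Complex.real_smul] at hfirst
    linear_combination hfirst
  have h12 := (mul_eq_zero.mp hc12).resolve_right hf
  have hc1 : c 1 = 0 := by simpa using congrArg Complex.re h12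
  have hc2 : c 2 = 0 := by simpa using congrArg Complex.im h12
  intro i
  fin_cases i
  exacts [hc0, hc1, hc2]

def borelCharacter (X : Matrix (Fin 3) (Fin 3) ℂ) : ℂ := X 1 1 - X 0 0

lemma exists_borelCharacter_im_ne_zero : ∃ c ∈ borelCharacter '' borelSub, c.im ≠ 0 :=
  ⟨_, ⟨_, borelMatrix_mem 0 1 0 0 0, rfl⟩, by norm_num [borelCharacter, borelMatrix]⟩

section

variable {W : Submodule ℝ (Matrix (Fin 3) (Fin 3) ℂ)}

lemma ker_lowerFirstColumn_comp_subtype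
    (hWg : ∀ Xm ∈ W, Xmᴴ * J3 + J3 * Xm = 0 ∧ Matrix.trace Xm = 0) :
    LinearMap.ker (lowerFirstColumn ∘ₗ W.subtype) = borelSub.comap W.subtype := by
  ext ⟨X, hXW⟩
  simp only [LinearMap.mem_ker, LinearMap.comp_apply, Submodule.mem_comap,
    Submodule.subtype_apply, lowerFirstColumn_apply, Prod.mk_eq_zero]
  constructor
  · rintro ⟨h10, h20⟩
    have h21 : X 2 1 = 0 := by
      simpa [h10] using apply_rev_eq_neg_conj_apply_rev (hWg X hXW).1 0 1
    refine ⟨hWg X hXW, fun i j hij => ?_⟩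
    fin_cases i <;> fin_cases j <;> first | exact absurd hij (by decide) | assumption
  · intro hX
    exact ⟨hX.2 1 0 (by decide), hX.2 2 0 (by decide)⟩

lemma finrank_range_of_ker_eq_comap_borelSub (hBW : borelSub ≤ W)
    (hdim : Module.finrank ℝ W = 7) {M : Type*} [AddCommGroup M] [Module ℝ M]
    (f : W →ₗ[ℝ] M) (hf : LinearMap.ker f = borelSub.comap W.subtype) :
    Module.finrank ℝ (LinearMap.range f) = 2 := by
  have hker : Module.finrank ℝ (LinearMap.ker f) = 5 := by
    rw [hf, (Submodule.comapSubtypeEquivOfLe hBW).finrank_eq, finrank_borelSub]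
  have := LinearMap.finrank_range_add_finrank_ker f
  omega

lemma apply_two_zero_eq_zero_of_mem (hBW : borelSub ≤ W)
    (hWg : ∀ Xm ∈ W, Xmᴴ * J3 + J3 * Xm = 0 ∧ Matrix.trace Xm = 0)
    (hdim : Module.finrank ℝ W = 7)
    (hbr : ∀ Xm ∈ borelSub, ∀ Ym ∈ W, Xm * Ym - Ym * Xm ∈ W) {w : Matrix (Fin 3) (Fin 3) ℂ}
    (hw : w ∈ W) : w 2 0 = 0 := by
  by_contra hf
  set ρ := lowerFirstColumn ∘ₗ W.subtype
  have hE := borelMatrix_mem 0 0 1 0 0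
  have hE' := borelMatrix_mem 0 0 0 1 0
  have hEw : lowerFirstColumn (borelMatrix 0 0 1 0 0 * w - w * borelMatrix 0 0 1 0 0) =
      (-w 2 0, 0) := by
    rw [lowerFirstColumn_commutator (blockTriangular_of_mem_borelSub hE)]
    simp [borelMatrix]
  have hE'w : lowerFirstColumn (borelMatrix 0 0 0 1 0 * w - w * borelMatrix 0 0 0 1 0) =
      (I * w 2 0, 0) := by
    rw [lowerFirstColumn_commutator (blockTriangular_of_mem_borelSub hE')]
    simp [borelMatrix]
  let u : Fin 3 → W := ![⟨w, hw⟩, ⟨_, hbr _ hE w hw⟩, ⟨_, hbr _ hE' w hw⟩]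
  have hρu : ρ ∘ u = ![(w 1 0, w 2 0), (-w 2 0, 0), (I * w 2 0, 0)] := by
    ext i : 1
    fin_cases i
    exacts [rfl, hEw, hE'w]
  have hli : LinearIndependent ℝ (ρ.rangeRestrict ∘ u) := by
    apply LinearIndependent.of_comp (LinearMap.range ρ).subtype
    exact hρu ▸ linearIndependent_complex_prod_triple _ hf
  have hcard := hli.fintype_card_le_finrank
  rw [finrank_range_of_ker_eq_comap_borelSub hBW hdim ρ (ker_lowerFirstColumn_comp_subtype hWg)]
    at hcard
  simp at hcard

lemma exists_quotientEquiv_complex (hBW : borelSub ≤ W)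
    (hWg : ∀ Xm ∈ W, Xmᴴ * J3 + J3 * Xm = 0 ∧ Matrix.trace Xm = 0)
    (hdim : Module.finrank ℝ W = 7) (h20 : ∀ w ∈ W, w 2 0 = 0) :
    ∃ e : (W ⧸ borelSub.comap W.subtype) ≃ₗ[ℝ] ℂ,
      ∀ w : W, e (Submodule.Quotient.mk w) = (w : Matrix (Fin 3) (Fin 3) ℂ) 1 0 := by
  set φ := Matrix.entryLinearMap ℝ ℂ 1 0 ∘ₗ W.subtype
  have hker : LinearMap.ker φ = borelSub.comap W.subtype := by
    rw [← ker_lowerFirstColumn_comp_subtype hWg]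
    ext ⟨X, hX⟩
    simp [φ, h20 X hX]
  have hsurj : Function.Surjective φ := by
    rw [← LinearMap.range_eq_top]
    apply Submodule.eq_top_of_finrank_eq
    rw [finrank_range_of_ker_eq_comap_borelSub hBW hdim φ hker, Complex.finrank_real_complex]
  exact ⟨(Submodule.quotEquivOfEq _ _ hker.symm).trans (φ.quotKerEquivOfSurjective hsurj),
    fun w => rfl⟩

lemma invariant_iff_commute_mulLeft (hbr : ∀ Xm ∈ borelSub, ∀ Ym ∈ W, Xm * Ym - Ym * Xm ∈ W)
    (h20 : ∀ w ∈ W, w 2 0 = 0)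
    (e : (W ⧸ borelSub.comap W.subtype) ≃ₗ[ℝ] ℂ)
    (he : ∀ w : W, e (Submodule.Quotient.mk w) = (w : Matrix (Fin 3) (Fin 3) ℂ) 1 0)
    (K : Module.End ℝ (W ⧸ borelSub.comap W.subtype)) :
    (∀ Xm, ∀ hX : Xm ∈ borelSub, ∀ w w' : W,
        K (Submodule.Quotient.mk w) = Submodule.Quotient.mk w' →
        K (Submodule.Quotient.mk (⟨Xm * w - w * Xm, hbr Xm hX w w.2⟩ : W)) =
          Submodule.Quotient.mk (⟨Xm * w' - w' * Xm, hbr Xm hX w' w'.2⟩ : W)) ↔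
      ∀ c ∈ borelCharacter '' borelSub, Commute (e.conj K) (LinearMap.mulLeft ℝ c) := by
  have hmk : ∀ X (hX : X ∈ borelSub) (w : W),
      e (Submodule.Quotient.mk (⟨X * w - w * X, hbr X hX w w.2⟩ : W)) =
        borelCharacter X * e (Submodule.Quotient.mk w) := by
    intro X hX w
    rw [he, he]
    change (X * w - w * X) 1 0 = _
    rw [Matrix.commutator_apply_one_zero (blockTriangular_of_mem_borelSub hX),
      h20 w w.2, mul_zero, add_zero, borelCharacter]
  rw [Set.forall_mem_image]
  constructor
  · intro hK X hX
    ext z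
    obtain ⟨w, rfl⟩ : ∃ w : W, e (Submodule.Quotient.mk w) = z := by
      obtain ⟨q, rfl⟩ := e.surjective z
      obtain ⟨w, rfl⟩ := Submodule.Quotient.mk_surjective _ q
      exact ⟨w, rfl⟩
    obtain ⟨w', hw'⟩ := Submodule.Quotient.mk_surjective _ (K (Submodule.Quotient.mk w))
    simp only [Module.End.mul_apply, LinearEquiv.conj_apply_apply, LinearMap.mulLeft_apply,
      e.symm_apply_apply, ← hmk X hX, hK X hX w w' hw'.symm, ← hw']
  · intro hK X hX w w' hww'
    apply e.injective
    have := LinearMap.congr_fun (hK hX) (e (Submodule.Quotient.mk w))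
    simp only [Module.End.mul_apply, LinearEquiv.conj_apply_apply, LinearMap.mulLeft_apply,
      e.symm_apply_apply, ← hmk X hX, hww'] at this
    exact this

end

theorem two_invariant_complex_structures
    (W : Submodule ℝ (Matrix (Fin 3) (Fin 3) ℂ))
    (hBW : borelSub ≤ W)
    (hWg : ∀ Xm ∈ W, Xmᴴ * J3 + J3 * Xm = 0 ∧ Matrix.trace Xm = 0)
    (hdim : Module.finrank ℝ W = 7)
    (hbr : ∀ Xm ∈ borelSub, ∀ Ym ∈ W, Xm * Ym - Ym * Xm ∈ W) :
    ∃ 𝒥 : (W ⧸ borelSub.comap W.subtype) →ₗ[ℝ] (W ⧸ borelSub.comap W.subtype),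
      𝒥 ≠ -𝒥 ∧
      ∀ K : (W ⧸ borelSub.comap W.subtype) →ₗ[ℝ] (W ⧸ borelSub.comap W.subtype),
        ((∀ q, K (K q) = -q) ∧
          (∀ Xm, ∀ hX : Xm ∈ borelSub, ∀ w w' : W,
            K (Submodule.Quotient.mk w) = Submodule.Quotient.mk w' →
            K (Submodule.Quotient.mk
                (⟨Xm * (w : Matrix (Fin 3) (Fin 3) ℂ) - (w : Matrix (Fin 3) (Fin 3) ℂ) * Xm,
                  hbr Xm hX (w : Matrix (Fin 3) (Fin 3) ℂ) w.2⟩ : W)) =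
              Submodule.Quotient.mk
                (⟨Xm * (w' : Matrix (Fin 3) (Fin 3) ℂ) - (w' : Matrix (Fin 3) (Fin 3) ℂ) * Xm,
                  hbr Xm hX (w' : Matrix (Fin 3) (Fin 3) ℂ) w'.2⟩ : W)))
          ↔ (K = 𝒥 ∨ K = -𝒥) := by
  have h20 : ∀ w ∈ W, w 2 0 = 0 := fun _ hw => apply_two_zero_eq_zero_of_mem hBW hWg hdim hbr hw
  obtain ⟨e, he⟩ := exists_quotientEquiv_complex hBW hWg hdim h20
  refine ⟨e.symm.conj (LinearMap.mulLeft ℝ I), fun h => ?_, fun K => ?_⟩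
  · have := LinearMap.congr_fun (e.symm.conj.injective (h.trans (map_neg _ _).symm)) 1
    exact I_ne_zero (CharZero.eq_neg_self_iff.mp (by simpa using this))
  · rw [← map_neg, e.eq_symm_conj_iff, e.eq_symm_conj_iff, ← e.conj_mul_self_eq_neg_one_iff,
      invariant_iff_commute_mulLeft hbr h20 e he K]
    exact Complex.mul_self_eq_neg_one_and_commute_iff exists_borelCharacter_im_ne_zero _
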